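/- For all real x > 0, 1/(2x) - 1/(12x²) < ψ(x+1) - log x, where ψ is the digamma function. -/

import Mathlib

/-!
Put `R x = ψ(x + 1) - log x - (1/(2x) - 1/(12x²))`. By the recurrence `ψ(x + 1) = ψ(x) + 1/x`,
`R x - R (x + 1) = log (1 + t) - logMinorant t` with `t = 1/x`, and this is positive since the
difference vanishes at `t = 0` and has derivative `t⁴ / (6 (1 + t)³)`. So `R` strictly decreases
along `x, x + 1, x + 2, …`. On the other hand, log-convexity of `Γ` gives `log x ≤ ψ(x + 1)`,
whence `R x ≥ -1/(2x) → 0`. Hence `R x > R (x + 1) ≥ 0`.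
-/

open Real Filter

/-- The digamma function ψ(x) = Γ′(x)/Γ(x). -/
noncomputable def digamma (x : ℝ) : ℝ := deriv Real.Gamma x / Real.Gamma x

noncomputable def logMinorant (t : ℝ) : ℝ :=
  t / 2 + t / (2 * (1 + t)) - t ^ 2 / 12 + t ^ 2 / (12 * (1 + t) ^ 2)

lemma hasDerivAt_log_one_add_sub_logMinorant {t : ℝ} (ht : -1 < t) :
    HasDerivAt (fun s => log (1 + s) - logMinorant s) (t ^ 4 / (6 * (1 + t) ^ 3)) t := by
  have h0 : 1 + t ≠ 0 := by linarith
  have hlog := ((hasDerivAt_id t).const_add 1).log h0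
  have hlin := (hasDerivAt_id t).div_const 2
  have hfrac := (hasDerivAt_id t).div (((hasDerivAt_id t).const_add 1).const_mul 2)
    (mul_ne_zero two_ne_zero h0)
  have hsq := (hasDerivAt_pow 2 t).div_const 12
  have hsqfrac := (hasDerivAt_pow 2 t).div
    ((((hasDerivAt_id t).const_add 1).pow 2).const_mul 12)
    (mul_ne_zero (by norm_num) (pow_ne_zero 2 h0))
  refine (hlog.sub (((hlin.add hfrac).sub hsq).add hsqfrac)).congr_deriv ?_
  simp only [id, Pi.pow_apply]
  field_simp
  ring

lemma logMinorant_lt_log_one_add {t : ℝ} (ht : 0 < t) : logMinorant t < log (1 + t) := by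
  have hmono : StrictMonoOn (fun s => log (1 + s) - logMinorant s) (Set.Ici 0) := by
    refine strictMonoOn_of_hasDerivWithinAt_pos (convex_Ici 0)
      (fun s hs => (hasDerivAt_log_one_add_sub_logMinorant (by
        simp only [Set.mem_Ici] at hs; linarith)).continuousAt.continuousWithinAt)
      (fun s hs => (hasDerivAt_log_one_add_sub_logMinorant (by
        simp only [interior_Ici, Set.mem_Ioi] at hs; linarith)).hasDerivWithinAt) ?_
    intro s hs
    simp only [interior_Ici, Set.mem_Ioi] at hs
    positivity
  simpa [logMinorant] using hmono Set.self_mem_Ici ht.le ht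

lemma lt_log_add_one_sub_log {x : ℝ} (hx : 0 < x) :
    (1 / (2 * x) - 1 / (12 * x ^ 2)) - (1 / (2 * (x + 1)) - 1 / (12 * (x + 1) ^ 2)) + 1 / (x + 1)
      < log (x + 1) - log x := by
  have h := logMinorant_lt_log_one_add (one_div_pos.2 hx)
  rw [show 1 + 1 / x = (x + 1) / x by field_simp, log_div (by positivity) hx.ne'] at h
  convert h using 1
  rw [logMinorant]
  field_simp
  ring

lemma ne_neg_natCast_of_pos {x : ℝ} (hx : 0 < x) (m : ℕ) : x ≠ -m :=
  ((neg_nonpos.2 m.cast_nonneg).trans_lt hx).ne'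

lemma digamma_add_one {x : ℝ} (hx : ∀ m : ℕ, x ≠ -m) : digamma (x + 1) = digamma x + 1 / x := by
  have hx0 : x ≠ 0 := by simpa using hx 0
  have hderiv : deriv Gamma (x + 1) = Gamma x + x * deriv Gamma x := by
    rw [← deriv_comp_add_const, Filter.EventuallyEq.deriv_eq (f := fun y => y * Gamma y)]
    · rw [deriv_fun_mul differentiableAt_fun_id (differentiableAt_Gamma hx), deriv_id'', one_mul]
    · filter_upwards [isOpen_ne.mem_nhds hx0] with y hy using Gamma_add_one hy
  have hΓ := Gamma_ne_zero hx
  rw [digamma, digamma, hderiv, Gamma_add_one hx0]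
  field_simp
  ring

lemma hasDerivAt_log_Gamma {x : ℝ} (hx : ∀ m : ℕ, x ≠ -m) :
    HasDerivAt (log ∘ Gamma) (digamma x) x :=
  (differentiableAt_Gamma hx).hasDerivAt.log (Gamma_ne_zero hx)

lemma log_le_digamma_add_one {x : ℝ} (hx : 0 < x) : log x ≤ digamma (x + 1) := by
  have hx1 : 0 < x + 1 := by linarith
  calc log x = slope (log ∘ Gamma) x (x + 1) := by
        rw [slope_def_field, add_sub_cancel_left, div_one, Function.comp_apply,
          Function.comp_apply, Gamma_add_one hx.ne', log_mul hx.ne' (Gamma_pos_of_pos hx).ne',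
          add_sub_cancel_right]
    _ ≤ digamma (x + 1) := convexOn_log_Gamma.slope_le_of_hasDerivAt hx hx1 (lt_add_one x)
        (hasDerivAt_log_Gamma (ne_neg_natCast_of_pos hx1))

noncomputable def digammaRemainder (x : ℝ) : ℝ :=
  digamma (x + 1) - log x - (1 / (2 * x) - 1 / (12 * x ^ 2))

lemma digammaRemainder_add_one_lt {x : ℝ} (hx : 0 < x) :
    digammaRemainder (x + 1) < digammaRemainder x := by
  have hrec := digamma_add_one (ne_neg_natCast_of_pos (x := x + 1) (by positivity))
  have := lt_log_add_one_sub_log hx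
  rw [digammaRemainder, digammaRemainder, hrec]
  linarith

lemma neg_le_digammaRemainder {x : ℝ} (hx : 0 < x) : -(1 / (2 * x)) ≤ digammaRemainder x := by
  have := log_le_digamma_add_one hx
  have : 0 ≤ 1 / (12 * x ^ 2) := by positivity
  rw [digammaRemainder]
  linarith

lemma digammaRemainder_nonneg {x : ℝ} (hx : 0 < x) : 0 ≤ digammaRemainder x := by
  have hanti : Antitone fun n : ℕ => digammaRemainder (x + n) :=
    antitone_nat_of_succ_le fun n => by
      rw [Nat.cast_succ, ← add_assoc]
      exact (digammaRemainder_add_one_lt (by positivity)).le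
  have hlim : Tendsto (fun n : ℕ => -(1 / (2 * (x + n)))) atTop (nhds 0) := by
    have := (tendsto_atTop_add_const_left atTop x tendsto_natCast_atTop_atTop).const_mul_atTop
      two_pos
    simpa using this.inv_tendsto_atTop.neg
  refine le_of_tendsto' hlim fun n => (neg_le_digammaRemainder (by positivity)).trans ?_
  simpa using hanti n.zero_le

theorem lt_digamma_succ_sub_log (x : ℝ) (hx : 0 < x) :
    1 / (2 * x) - 1 / (12 * x ^ 2) < digamma (x + 1) - Real.log x := by
  have := (digammaRemainder_nonneg (x := x + 1) (by positivity)).trans_lt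
    (digammaRemainder_add_one_lt hx)
  rw [digammaRemainder] at this
  linarith
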